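/- Let r > 0. If p, q are relatively prime positive integers with p² + q² > 1/(4r²), then there exists a ∈ (0,1) (namely a = 1/(2p)) such that the open r-neighborhood of the orbit of γ(a, p/q) contains the unit square [0,1]². -/

import Mathlib

open Set

/-- The folding map on one coordinate. -/
noncomputable def fold (t : ℝ) : ℝ := if Even ⌊t⌋ then Int.fract t else 1 - Int.fract t

/-- A point of the Euclidean plane. -/
noncomputable def pt (x y : ℝ) : EuclideanSpace ℝ (Fin 2) := WithLp.toLp 2 ![x, y]

/-- The orbit of the billiard trajectory γ(a, p/q) in the unit square, obtained by folding
the unfolded ray `y = (p/q)(x - a), y ≥ 0` back into the square. -/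
noncomputable def billiardOrbit (a : ℝ) (p q : ℕ) : Set (EuclideanSpace ℝ (Fin 2)) :=
  {z | ∃ x y : ℝ, 0 ≤ y ∧ y = ((p : ℝ) / q) * (x - a) ∧ z = pt (fold x) (fold y)}

/-- The unit square [0,1]² in the Euclidean plane. -/
def unitSquare : Set (EuclideanSpace ℝ (Fin 2)) :=
  {z | z 0 ∈ Icc (0:ℝ) 1 ∧ z 1 ∈ Icc (0:ℝ) 1}

/-- Optimal covering radius of a set: the infimum of r > 0 whose open r-neighborhood
covers the unit square. -/
noncomputable def rcov (S : Set (EuclideanSpace ℝ (Fin 2))) : ℝ :=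
  sInf {r : ℝ | 0 < r ∧ unitSquare ⊆ Metric.thickening r S}

/-!
Unfold the billiard: `fold` is the distance to `2ℤ`, so it is 1-Lipschitz and the folding map
`(x, y) ↦ (fold x, fold y)` sends the ray `q y = p x - 1/2, y ≥ 0` onto the orbit. A point
`(u, v)` of the square has the preimages `(σu + 2m, σv + 2n)`, `σ = ±1`, on which `p x - q y`
takes the values `σ(pu - qv) + 2(pm - qn)`. Choosing `σ` and then `m, n` by Bézout, one of them,
with `n ≥ 1`, satisfies `0 ≤ p x - q y ≤ 1`, i.e. lies within `1 / (2√(p² + q²)) < r` of the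
line; its orthogonal projection is still on the ray, and folding it back gives a point of the
orbit within `r` of `(u, v)`.
-/

lemma abs_sub_two_mul_le_of_abs_le_one {t : ℝ} {k₀ : ℤ} (h : |t - 2 * k₀| ≤ 1) (k : ℤ) :
    |t - 2 * k₀| ≤ |t - 2 * k| := by
  rcases eq_or_ne k k₀ with rfl | hne
  · rfl
  have hk : (1 : ℝ) ≤ |(k : ℝ) - k₀| := by
    exact_mod_cast Int.one_le_abs (sub_ne_zero.mpr hne)
  have := abs_sub_le (2 * (k : ℝ)) t (2 * k₀)
  rw [abs_sub_comm (2 * (k : ℝ)) t, ← mul_sub, abs_mul, abs_two] at this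
  linarith

lemma exists_fold_eq_abs_sub_two_mul (t : ℝ) : ∃ k : ℤ, |t - 2 * k| ≤ 1 ∧ fold t = |t - 2 * k| := by
  have h₁ := Int.floor_le t
  have h₂ := Int.lt_floor_add_one t
  obtain ⟨m, hm | hm⟩ := Int.even_or_odd' ⌊t⌋
  · refine ⟨m, ?_, ?_⟩
    · rw [hm] at h₁ h₂; push_cast at h₁ h₂
      rw [abs_le]; constructor <;> linarith
    · rw [fold, if_pos (hm ▸ even_two_mul m), Int.fract, hm]; push_cast
      rw [abs_of_nonneg (by rw [hm] at h₁; push_cast at h₁; linarith)]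
  · refine ⟨m + 1, ?_, ?_⟩
    · rw [hm] at h₁ h₂; push_cast at h₁ h₂ ⊢
      rw [abs_le]; constructor <;> linarith
    · have hodd : ¬Even ⌊t⌋ := by rw [hm, Int.not_even_iff_odd]; exact odd_two_mul_add_one m
      rw [fold, if_neg hodd, Int.fract, hm]
      rw [hm] at h₂; push_cast at h₂ ⊢
      rw [abs_of_nonpos (by linarith)]; ring

lemma fold_le_abs_sub_two_mul (t : ℝ) (k : ℤ) : fold t ≤ |t - 2 * k| := by
  obtain ⟨k₀, hk₀, hfold⟩ := exists_fold_eq_abs_sub_two_mul t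
  exact hfold ▸ abs_sub_two_mul_le_of_abs_le_one hk₀ k

lemma fold_eq_abs_sub_two_mul {t : ℝ} {k : ℤ} (h : |t - 2 * k| ≤ 1) : fold t = |t - 2 * k| := by
  obtain ⟨k₀, hk₀, hfold⟩ := exists_fold_eq_abs_sub_two_mul t
  exact le_antisymm (fold_le_abs_sub_two_mul t k) (hfold ▸ abs_sub_two_mul_le_of_abs_le_one h k₀)

lemma fold_mul_add_two_mul {σ u : ℝ} (hσ : |σ| = 1) (hu : u ∈ Icc (0 : ℝ) 1) (m : ℤ) :
    fold (σ * u + 2 * m) = u := by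
  have h : |σ * u| = u := by rw [abs_mul, hσ, one_mul, abs_of_nonneg hu.1]
  rw [fold_eq_abs_sub_two_mul (k := m) (by rw [add_sub_cancel_right, h]; exact hu.2),
    add_sub_cancel_right, h]

lemma abs_fold_sub_fold_le (s t : ℝ) : |fold s - fold t| ≤ |s - t| := by
  suffices ∀ s t, fold s - fold t ≤ |s - t| from
    abs_sub_le_iff.mpr ⟨this s t, abs_sub_comm s t ▸ this t s⟩
  intro s t
  obtain ⟨k, -, hfold⟩ := exists_fold_eq_abs_sub_two_mul t
  have := abs_sub_le s t (2 * k)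
  linarith [fold_le_abs_sub_two_mul s k]

lemma dist_pt_pt (x y x' y' : ℝ) : dist (pt x y) (pt x' y') = √((x - x') ^ 2 + (y - y') ^ 2) := by
  simp [pt, EuclideanSpace.dist_eq, Fin.sum_univ_two, Real.dist_eq, sq_abs]

lemma dist_pt_fold_le (x y x' y' : ℝ) :
    dist (pt (fold x) (fold y)) (pt (fold x') (fold y')) ≤ dist (pt x y) (pt x' y') := by
  rw [dist_pt_pt, dist_pt_pt]
  exact Real.sqrt_le_sqrt (add_le_add (sq_le_sq.mpr (by simpa using abs_fold_sub_fold_le _ _))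
    (sq_le_sq.mpr (by simpa using abs_fold_sub_fold_le _ _)))

lemma pt_apply_zero_apply_one (z : EuclideanSpace ℝ (Fin 2)) : pt (z 0) (z 1) = z := by
  ext i; fin_cases i <;> rfl

lemma exists_abs_eq_one_mul_sub_two_mul_mem_Icc (c : ℝ) :
    ∃ σ : ℝ, |σ| = 1 ∧ ∃ j : ℤ, σ * c - 2 * j ∈ Icc (0 : ℝ) 1 := by
  obtain ⟨k, hk, -⟩ := exists_fold_eq_abs_sub_two_mul c
  rcases le_total 0 (c - 2 * k) with h | h
  · exact ⟨1, abs_one, k, by rw [one_mul]; exact ⟨h, (abs_of_nonneg h).symm ▸ hk⟩⟩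
  · refine ⟨-1, by simp, -k, ?_, ?_⟩ <;> push_cast
    · linarith
    · linarith [(abs_of_nonpos h).symm ▸ hk]

lemma exists_mul_sub_mul_eq_of_coprime {p q : ℕ} (hp : 0 < p) (hpq : p.Coprime q) (j : ℤ) :
    ∃ m n : ℤ, p * m - q * n = j ∧ 1 ≤ n := by
  obtain ⟨A, B, hAB⟩ := Int.isCoprime_iff_gcd_eq_one.mpr (by exact_mod_cast hpq : Int.gcd p q = 1)
  -- shift a Bézout solution `(jA, -jB)` along the kernel `(q, p)` until `n ≥ 1`
  set N := |j * B| + 1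
  refine ⟨j * A + q * N, -(j * B) + p * N, by linear_combination j * hAB, ?_⟩
  have : N ≤ p * N := le_mul_of_one_le_left (by positivity) (by exact_mod_cast hp)
  linarith [le_abs_self (j * B)]

lemma exists_fold_eq_of_mem_Icc {p q : ℕ} (hp : 0 < p) (hpq : p.Coprime q) {u v : ℝ}
    (hu : u ∈ Icc (0 : ℝ) 1) (hv : v ∈ Icc (0 : ℝ) 1) :
    ∃ x y : ℝ, fold x = u ∧ fold y = v ∧ 1 ≤ y ∧ p * x - q * y ∈ Icc (0 : ℝ) 1 := by
  obtain ⟨σ, hσ, j, hj⟩ := exists_abs_eq_one_mul_sub_two_mul_mem_Icc (p * u - q * v)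
  obtain ⟨m, n, hmn, hn⟩ := exists_mul_sub_mul_eq_of_coprime hp hpq (-j)
  refine ⟨σ * u + 2 * m, σ * v + 2 * n, fold_mul_add_two_mul hσ hu m,
    fold_mul_add_two_mul hσ hv n, ?_, ?_⟩
  · have hσv : -1 ≤ σ * v := by
      have := neg_abs_le (σ * v)
      rw [abs_mul, hσ, one_mul, abs_of_nonneg hv.1] at this
      linarith [hv.2]
    have : (1 : ℝ) ≤ n := by exact_mod_cast hn
    linarith
  · have hmn : (p : ℝ) * m - q * n = -j := by exact_mod_cast hmn
    convert hj using 1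
    linear_combination 2 * hmn

lemma exists_mem_ray_dist_lt {p q : ℕ} (hp : 0 < p) (hq : 0 < q) {r : ℝ} (hr : 0 < r)
    (hbig : 1 / (4 * r ^ 2) < (p : ℝ) ^ 2 + (q : ℝ) ^ 2) {x₀ y₀ : ℝ} (hy₀ : 1 ≤ y₀)
    (hline : p * x₀ - q * y₀ ∈ Icc (0 : ℝ) 1) :
    ∃ x y : ℝ, 0 ≤ y ∧ y = ((p : ℝ) / q) * (x - 1 / (2 * p)) ∧ dist (pt x₀ y₀) (pt x y) < r := by
  set S : ℝ := p ^ 2 + q ^ 2 with hS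
  have hSpos : 0 < S := by positivity
  set d := p * x₀ - q * y₀ - 1 / 2 with hd_def
  have hd : |d| ≤ 1 / 2 := abs_le.mpr ⟨by linarith [hline.1], by linarith [hline.2]⟩
  -- the orthogonal projection of `(x₀, y₀)` onto the line `p x - q y = 1/2`
  refine ⟨x₀ - d * p / S, y₀ + d * q / S, ?_, ?_, ?_⟩
  · have hqS : (q : ℝ) ≤ S := by nlinarith [(by exact_mod_cast hq : (1 : ℝ) ≤ q)]
    have : -(1 / 2) ≤ d * q / S := by
      rw [le_div_iff₀ hSpos]; nlinarith [neg_abs_le d]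
    linarith
  · field_simp
    linear_combination (-(q : ℝ)) * d * hS
  · rw [dist_pt_pt, Real.sqrt_lt' hr]
    have hb : 1 < 4 * r ^ 2 * S := (div_lt_iff₀' (by positivity)).mp hbig
    calc (x₀ - (x₀ - d * p / S)) ^ 2 + (y₀ - (y₀ + d * q / S)) ^ 2 = d ^ 2 / S := by
          field_simp; ring
      _ ≤ (1 / 2) ^ 2 / S :=
          (div_le_div_iff_of_pos_right hSpos).mpr (sq_le_sq' (abs_le.mp hd).1 (abs_le.mp hd).2)
      _ < r ^ 2 := by rw [div_lt_iff₀ hSpos]; linarith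

theorem stmt18 (r : ℝ) (hr : 0 < r) (p q : ℕ) (hp : 0 < p) (hq : 0 < q)
    (hpq : Nat.Coprime p q) (hbig : 1 / (4 * r ^ 2) < (p : ℝ) ^ 2 + (q : ℝ) ^ 2) :
    ∃ a ∈ Set.Ioo (0:ℝ) 1, a = 1 / (2 * (p : ℝ)) ∧
      unitSquare ⊆ Metric.thickening r (billiardOrbit a p q) := by
  have hp1 : (1 : ℝ) ≤ p := by exact_mod_cast hp
  refine ⟨1 / (2 * p), ⟨by positivity, by rw [div_lt_one (by positivity)]; linarith⟩, rfl, ?_⟩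
  rintro z ⟨hu, hv⟩
  obtain ⟨x₀, y₀, hx₀, hy₀, hy₀1, hline⟩ := exists_fold_eq_of_mem_Icc hp hpq hu hv
  obtain ⟨x, y, hy, hxy, hdist⟩ := exists_mem_ray_dist_lt hp hq hr hbig hy₀1 hline
  refine Metric.mem_thickening_iff.mpr ⟨pt (fold x) (fold y), ⟨x, y, hy, hxy, rfl⟩, ?_⟩
  calc dist z (pt (fold x) (fold y))
      = dist (pt (fold x₀) (fold y₀)) (pt (fold x) (fold y)) := by
        rw [hx₀, hy₀, pt_apply_zero_apply_one]
    _ ≤ dist (pt x₀ y₀) (pt x y) := dist_pt_fold_le x₀ y₀ x y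
    _ < r := hdist
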